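/- arXiv:1008.3482 — 9 statements merged into one kernel-verified Lean document; each statement's English description precedes it below -/
import Mathlib

section
/- The product numerical range of an operator on a tensor product Hilbert space is a connected subset of the complex plane. -/
open Matrix Complex Kronecker Pointwise

/-- The Kronecker (tensor) product of two vectors. -/
def prodVec {K M : ℕ} (x : Fin K → ℂ) (y : Fin M → ℂ) : Fin K × Fin M → ℂ :=
  fun p => x p.1 * y p.2

/-- The product numerical range of an operator on `ℂ^K ⊗ ℂ^M`. -/
def pnr {K M : ℕ} (X : Matrix (Fin K × Fin M) (Fin K × Fin M) ℂ) : Set ℂ :=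
  {z | ∃ (x : Fin K → ℂ) (y : Fin M → ℂ),
    star x ⬝ᵥ x = 1 ∧ star y ⬝ᵥ y = 1 ∧
    star (prodVec x y) ⬝ᵥ X.mulVec (prodVec x y) = z}

/-- The numerical range of an operator on `ℂ^N`. -/
def nr {N : ℕ} (A : Matrix (Fin N) (Fin N) ℂ) : Set ℂ :=
  {z | ∃ x : Fin N → ℂ, star x ⬝ᵥ x = 1 ∧ star x ⬝ᵥ A.mulVec x = z}

/-!
The product numerical range is the image of the product of the unit spheres of `ℂ^K` and `ℂ^M`
under the continuous map `(x, y) ↦ ⟨x ⊗ y, X (x ⊗ y)⟩`. A nonzero complex space has real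
dimension at least two, so its spheres are connected, and so is a product of two of them and any
continuous image of it.
-/

theorem isConnected_sphere_of_complex {E : Type*} [NormedAddCommGroup E] [NormedSpace ℂ E]
    [Nontrivial E] (x : E) {r : ℝ} (hr : 0 ≤ r) : IsConnected (Metric.sphere x r) := by
  refine isConnected_sphere ?_ x hr
  have h_one_le : 1 ≤ Module.rank ℂ E := Cardinal.one_le_iff_pos.2 rank_pos
  calc (1 : Cardinal) < 2 * 1 := by norm_num
    _ ≤ 2 * Module.rank ℂ E := by gcongr
    _ = Module.rank ℝ E := (rank_real_of_complex E).symm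

theorem EuclideanSpace.star_dotProduct_self {ι : Type*} [Fintype ι] (x : EuclideanSpace ℂ ι) :
    star (WithLp.ofLp x) ⬝ᵥ WithLp.ofLp x = (‖x‖ ^ 2 : ℂ) := by
  rw [dotProduct_comm, ← EuclideanSpace.inner_eq_star_dotProduct, inner_self_eq_norm_sq_to_K]
  rfl

theorem isConnected_setOf_star_dotProduct_self_eq_one {ι : Type*} [Fintype ι] [Nonempty ι] :
    IsConnected {x : ι → ℂ | star x ⬝ᵥ x = 1} := by
  have h_eq : {x : ι → ℂ | star x ⬝ᵥ x = 1} =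
      WithLp.ofLp '' Metric.sphere (0 : EuclideanSpace ℂ ι) 1 := by
    ext x
    rw [← WithLp.ofLp_toLp 2 x, Set.mem_ofPred_eq, (WithLp.ofLp_injective 2).mem_set_image,
      EuclideanSpace.star_dotProduct_self, mem_sphere_zero_iff_norm]
    exact_mod_cast pow_eq_one_iff_of_nonneg (norm_nonneg _) two_ne_zero
  rw [h_eq]
  exact (isConnected_sphere_of_complex 0 zero_le_one).image _
    (PiLp.continuous_ofLp 2 _).continuousOn

@[fun_prop]
theorem Continuous.prodVec {α : Type*} [TopologicalSpace α] {K M : ℕ} {f : α → Fin K → ℂ}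
    {g : α → Fin M → ℂ} (hf : Continuous f) (hg : Continuous g) :
    Continuous fun a => prodVec (f a) (g a) := by
  unfold _root_.prodVec
  fun_prop

theorem pnr_isConnected {K M : ℕ} (hK : 0 < K) (hM : 0 < M)
    (X : Matrix (Fin K × Fin M) (Fin K × Fin M) ℂ) :
    IsConnected (pnr X) := by
  have : Nonempty (Fin K) := Fin.pos_iff_nonempty.1 hK
  have : Nonempty (Fin M) := Fin.pos_iff_nonempty.1 hM
  have h_image : pnr X = (fun p => star (prodVec p.1 p.2) ⬝ᵥ X *ᵥ prodVec p.1 p.2) ''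
      ({x | star x ⬝ᵥ x = 1} ×ˢ {y | star y ⬝ᵥ y = 1}) := by
    ext z
    simp [pnr, and_assoc]
  rw [h_image]
  exact (isConnected_setOf_star_dotProduct_self_eq_one.prod
    isConnected_setOf_star_dotProduct_self_eq_one).image _ (by fun_prop)
end

section
/- The product numerical range of any operator A on C^K ⊗ C^M contains the barycenter of its spectrum: tr(A)/(KM) ∈ Λ⊗(A). -/
open Matrix Complex Kronecker Pointwise

lemma aux_phi (p q d : ℂ) (hd : d ≠ 0) : ∃ (φ c : ℝ), 0 ≤ c ∧
    Complex.exp (φ * I) * p + Complex.exp (-(φ * I)) * q = -(c : ℂ) * d := by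
  set f : ℝ → ℂ := fun φ => Complex.exp (φ * I) * p + Complex.exp (-(φ * I)) * q with hf
  have hcont : Continuous fun φ : ℝ => ((f φ) / d).im := by fun_prop
  have hflip : ∀ φ : ℝ, f (φ + Real.pi) = - f φ := by
    intro φ
    simp only [hf]
    push_cast
    rw [add_mul, Complex.exp_add, neg_add, Complex.exp_add, Complex.exp_pi_mul_I]
    have : Complex.exp (-(Real.pi * I)) = -1 := by
      rw [Complex.exp_neg, Complex.exp_pi_mul_I]; norm_num
    rw [this]; ring
  have h2 : ((f Real.pi) / d).im = -((f 0) / d).im := by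
    have := hflip 0
    simp only [zero_add] at this
    rw [this]; simp [neg_div]
  have hiv : ∃ φ ∈ Set.Icc (0:ℝ) Real.pi, ((f φ)/d).im = 0 := by
    rcases le_total (((f 0)/d).im) 0 with h | h
    · exact intermediate_value_Icc Real.pi_pos.le hcont.continuousOn ⟨h, by rw [h2]; linarith⟩
    · exact intermediate_value_Icc' Real.pi_pos.le hcont.continuousOn ⟨by rw [h2]; linarith, h⟩
  obtain ⟨φ, _, hφ⟩ := hiv
  set r : ℝ := ((f φ)/d).re with hr
  have hdiv : (f φ) / d = (r : ℂ) := by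
    rw [Complex.ext_iff]; constructor <;> simp [hφ, hr]
  have hz : f φ = (r : ℂ) * d := by
    rw [div_eq_iff hd] at hdiv; exact hdiv
  rcases le_total r 0 with h | h
  · refine ⟨φ, -r, by linarith, ?_⟩
    show f φ = _
    rw [hz]; push_cast; ring
  · refine ⟨φ + Real.pi, r, h, ?_⟩
    show f (φ + Real.pi) = _
    rw [hflip, hz]; ring

lemma aux_theta (s c : ℝ) (hs0 : 0 ≤ s) (hs1 : s ≤ 1) :
    ∃ θ : ℝ, Real.cos θ ^ 2 - s = c * (Real.cos θ * Real.sin θ) := by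
  set g : ℝ → ℝ := fun θ => Real.cos θ ^ 2 - s - c * (Real.cos θ * Real.sin θ) with hg
  have hcont : Continuous g := by fun_prop
  have h0 : g 0 = 1 - s := by simp [hg]
  have h1 : g (Real.pi / 2) = -s := by simp [hg]
  have : ∃ θ ∈ Set.Icc (0:ℝ) (Real.pi/2), g θ = 0 := by
    refine intermediate_value_Icc' (by positivity) hcont.continuousOn ?_
    rw [h0, h1]; constructor <;> linarith
  obtain ⟨θ, _, hθ⟩ := this
  exact ⟨θ, by simp only [hg] at hθ; linarith⟩

lemma combine (a b p q : ℂ) (s : ℝ) (hs0 : 0 ≤ s) (hs1 : s ≤ 1) :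
    ∃ α β : ℂ, (starRingEnd ℂ) α * α + (starRingEnd ℂ) β * β = 1 ∧
      (starRingEnd ℂ) α * α * a + (starRingEnd ℂ) α * β * p
        + (starRingEnd ℂ) β * α * q + (starRingEnd ℂ) β * β * b
        = (s : ℂ) * a + (1 - (s : ℂ)) * b := by
  by_cases hab : a = b
  · exact ⟨1, 0, by norm_num, by subst hab; simp; ring⟩
  · obtain ⟨φ, c, hc, hφ⟩ := aux_phi p q (a - b) (sub_ne_zero.mpr hab)
    obtain ⟨θ, hθ⟩ := aux_theta s c hs0 hs1
    refine ⟨(Real.cos θ : ℂ), Complex.exp (φ * I) * (Real.sin θ : ℂ), ?_, ?_⟩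
    · have hconj : (starRingEnd ℂ) (Complex.exp (φ * I)) = Complex.exp (-(φ * I)) := by
        rw [← Complex.exp_conj]; congr 1; simp
      simp only [_root_.map_mul, Complex.conj_ofReal, hconj]
      have hE : Complex.exp (-(φ * I)) * Complex.exp (φ * I) = 1 := by
        rw [← Complex.exp_add]; simp
      have hpy : (Real.cos θ : ℂ)^2 + (Real.sin θ : ℂ)^2 = 1 := by
        push_cast [← Complex.ofReal_pow]
        exact_mod_cast congrArg (Complex.ofReal) (Real.cos_sq_add_sin_sq θ)
      linear_combination hpy + ((Real.sin θ:ℂ)^2) * hE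
    · have hconj : (starRingEnd ℂ) (Complex.exp (φ * I)) = Complex.exp (-(φ * I)) := by
        rw [← Complex.exp_conj]; congr 1; simp
      simp only [_root_.map_mul, Complex.conj_ofReal, hconj]
      have hE : Complex.exp (φ * I) * Complex.exp (-(φ * I)) = 1 := by
        rw [← Complex.exp_add]; simp
      have hpy : (Real.cos θ : ℂ)^2 + (Real.sin θ : ℂ)^2 = 1 := by
        exact_mod_cast congrArg (Complex.ofReal) (Real.cos_sq_add_sin_sq θ)
      have hθ' : (Real.cos θ : ℂ)^2 - (s:ℂ) = (c:ℂ) * ((Real.cos θ:ℂ) * (Real.sin θ:ℂ)) := by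
        exact_mod_cast congrArg (Complex.ofReal) hθ
      linear_combination ((Real.cos θ:ℂ)*(Real.sin θ:ℂ)) * hφ + (a - b) * hθ'
        + ((Real.sin θ:ℂ)^2 * b) * hE + b * hpy

lemma exists_mean : ∀ (N : ℕ) (C : Matrix (Fin (N+1)) (Fin (N+1)) ℂ),
    ∃ x : Fin (N+1) → ℂ, star x ⬝ᵥ x = 1 ∧ star x ⬝ᵥ C.mulVec x = C.trace / (N+1) := by
  intro N
  induction N with
  | zero =>
      intro C
      refine ⟨fun _ => 1, ?_, ?_⟩
      · simp [dotProduct]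
      · simp [dotProduct, mulVec, Matrix.trace, Matrix.diag, Fin.sum_univ_one]
  | succ n ih =>
      intro C
      obtain ⟨x', hx'1, hx'2⟩ := ih (C.submatrix Fin.castSucc Fin.castSucc)
      have hne : ∀ i : Fin (n+1), (i.castSucc = Fin.last (n+1)) = False :=
        fun i => eq_false (Fin.castSucc_lt_last i).ne
      set u : Fin (n+2) → ℂ := Fin.snoc x' 0 with hu
      set v : Fin (n+2) → ℂ := Pi.single (Fin.last (n+1)) 1 with hv
      set a : ℂ := (C.submatrix Fin.castSucc Fin.castSucc).trace / (n+1) with ha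
      set b : ℂ := C (Fin.last (n+1)) (Fin.last (n+1)) with hb
      set p : ℂ := ∑ i : Fin (n+1), (starRingEnd ℂ) (x' i) * C (Fin.castSucc i) (Fin.last (n+1)) with hp
      set q : ℂ := ∑ j : Fin (n+1), C (Fin.last (n+1)) (Fin.castSucc j) * x' j with hq
      have huu : star u ⬝ᵥ u = 1 := by
        rw [← hx'1]
        simp only [dotProduct, Pi.star_apply, hu]
        rw [Fin.sum_univ_castSucc]
        simp only [Fin.snoc_castSucc, Fin.snoc_last, star_zero, zero_mul, add_zero]
      have huv : star u ⬝ᵥ v = 0 := by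
        simp only [dotProduct, Pi.star_apply, hu, hv]
        rw [Fin.sum_univ_castSucc]
        simp only [Fin.snoc_castSucc, Fin.snoc_last, Pi.single_apply, hne, if_false,
          if_true, star_zero, zero_mul, mul_zero, add_zero, Finset.sum_const_zero, if_pos rfl]
      have hvu : star v ⬝ᵥ u = 0 := by
        simp only [dotProduct, Pi.star_apply, hu, hv]
        rw [Fin.sum_univ_castSucc]
        simp only [Fin.snoc_castSucc, Fin.snoc_last, Pi.single_apply, hne, if_false,
          star_zero, zero_mul, mul_zero, add_zero, Finset.sum_const_zero, if_pos rfl]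
      have hvv : star v ⬝ᵥ v = 1 := by
        simp only [dotProduct, Pi.star_apply, hv]
        rw [Fin.sum_univ_castSucc]
        simp only [Pi.single_apply, hne, if_false, star_zero, zero_mul, mul_zero,
          Finset.sum_const_zero, if_pos rfl, zero_add]
        simp
      have huCu : star u ⬝ᵥ C.mulVec u = a := by
        rw [← hx'2]
        simp only [dotProduct, mulVec, Pi.star_apply, hu]
        rw [Fin.sum_univ_castSucc]
        simp only [Fin.snoc_castSucc, Fin.snoc_last, star_zero, zero_mul, add_zero]
        refine Finset.sum_congr rfl fun i _ => ?_
        congr 1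
        rw [Fin.sum_univ_castSucc]
        simp only [Fin.snoc_castSucc, Fin.snoc_last, mul_zero, add_zero, submatrix_apply]
      have huCv : star u ⬝ᵥ C.mulVec v = p := by
        simp only [dotProduct, mulVec, Pi.star_apply, hu, hv, hp]
        rw [Fin.sum_univ_castSucc]
        simp only [Fin.snoc_castSucc, Fin.snoc_last, star_zero, zero_mul, add_zero]
        refine Finset.sum_congr rfl fun i _ => ?_
        congr 1
        rw [Fin.sum_univ_castSucc]
        simp only [Pi.single_apply, hne, if_false, mul_zero, Finset.sum_const_zero,
          if_pos rfl, zero_add, mul_one]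
        simp
      have hvCu : star v ⬝ᵥ C.mulVec u = q := by
        simp only [dotProduct, mulVec, Pi.star_apply, hu, hv, hq]
        rw [Fin.sum_univ_castSucc]
        simp only [Pi.single_apply, hne, if_false, star_zero, zero_mul,
          Finset.sum_const_zero, if_pos rfl, zero_add]
        rw [Fin.sum_univ_castSucc]
        simp only [Fin.snoc_castSucc, Fin.snoc_last, mul_zero, add_zero]
        simp [Finset.mul_sum]
      have hvCv : star v ⬝ᵥ C.mulVec v = b := by
        simp only [dotProduct, mulVec, Pi.star_apply, hv, hb]
        rw [Fin.sum_univ_castSucc]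
        simp only [Pi.single_apply, hne, if_false, star_zero, zero_mul,
          Finset.sum_const_zero, if_pos rfl, zero_add]
        rw [Fin.sum_univ_castSucc]
        simp only [hne, if_false, mul_zero, Finset.sum_const_zero, if_pos rfl, zero_add, mul_one]
        simp
      have hs0 : (0:ℝ) ≤ ((n:ℝ)+1)/((n:ℝ)+2) := by positivity
      have hs1 : ((n:ℝ)+1)/((n:ℝ)+2) ≤ 1 := by
        rw [div_le_one (by positivity)]; linarith
      obtain ⟨α, β, hn, hval⟩ := combine a b p q (((n:ℝ)+1)/((n:ℝ)+2)) hs0 hs1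
      have hstar : star (α • u + β • v) = (starRingEnd ℂ) α • star u + (starRingEnd ℂ) β • star v := by
        rw [star_add, star_smul, star_smul]; rfl
      refine ⟨α • u + β • v, ?_, ?_⟩
      · rw [hstar]
        simp only [add_dotProduct, smul_dotProduct, dotProduct_add, dotProduct_smul, smul_eq_mul]
        rw [huu, huv, hvu, hvv]
        linear_combination hn
      · rw [hstar]
        simp only [mulVec_add, mulVec_smul, add_dotProduct, smul_dotProduct, dotProduct_add,
          dotProduct_smul, smul_eq_mul]
        rw [huCu, huCv, hvCu, hvCv]
        have h1 : ((n:ℂ)+1) ≠ 0 := by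
          have : ((n+1 : ℕ) : ℂ) ≠ 0 := Nat.cast_ne_zero.mpr (by omega)
          push_cast at this; exact this
        have h2 : ((n:ℂ)+2) ≠ 0 := by
          have : ((n+2 : ℕ) : ℂ) ≠ 0 := Nat.cast_ne_zero.mpr (by omega)
          push_cast at this; exact this
        have hs : (↑(((n:ℝ)+1)/((n:ℝ)+2)) : ℂ) = ((n:ℂ)+1)/((n:ℂ)+2) := by push_cast; ring
        rw [hs] at hval
        have htr : C.trace = (C.submatrix Fin.castSucc Fin.castSucc).trace + b := by
          simp only [Matrix.trace, Matrix.diag, hb, submatrix_apply]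
          rw [Fin.sum_univ_castSucc]
        rw [htr, show ((↑(n+1) : ℂ) + 1) = (n:ℂ)+2 by push_cast; ring, eq_div_iff h2]
        have haT : (C.submatrix Fin.castSucc Fin.castSucc).trace = a * ((n:ℂ)+1) := by
          rw [ha, div_mul_cancel₀ _ h1]
        rw [haT]
        have hinv : ((n:ℂ)+2) * ((n:ℂ)+2)⁻¹ = 1 := mul_inv_cancel₀ h2
        linear_combination ((n:ℂ)+2) * hval + (((n:ℂ)+1)*(a-b)) * hinv

theorem pnr_mem_barycenter {K M : ℕ} (hK : 0 < K) (hM : 0 < M)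
    (A : Matrix (Fin K × Fin M) (Fin K × Fin M) ℂ) :
    A.trace / ((K : ℂ) * (M : ℂ)) ∈ pnr A := by
  obtain ⟨m, rfl⟩ : ∃ m, M = m + 1 := ⟨M - 1, by omega⟩
  obtain ⟨k, rfl⟩ : ∃ k, K = k + 1 := ⟨K - 1, by omega⟩
  set B : Matrix (Fin (m+1)) (Fin (m+1)) ℂ :=
    fun r c => ∑ i : Fin (k+1), A (i, r) (i, c) with hB
  obtain ⟨y, hy1, hy2⟩ := exists_mean m B
  set Cy : Matrix (Fin (k+1)) (Fin (k+1)) ℂ :=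
    fun r c => ∑ s : Fin (m+1), ∑ t : Fin (m+1),
      (starRingEnd ℂ) (y s) * A (r, s) (c, t) * y t with hC
  obtain ⟨x, hx1, hx2⟩ := exists_mean k Cy
  refine ⟨x, y, hx1, hy1, ?_⟩
  have hBtr : B.trace = A.trace := by
    simp only [Matrix.trace, Matrix.diag, hB, Fintype.sum_prod_type]
    rw [Finset.sum_comm]
  have hCtr : Cy.trace = star y ⬝ᵥ B.mulVec y := by
    simp only [Matrix.trace, Matrix.diag, hC, hB, dotProduct, mulVec, Pi.star_apply,
      starRingEnd_apply, Finset.mul_sum, Finset.sum_mul]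
    rw [Finset.sum_comm]
    refine Finset.sum_congr rfl fun s _ => ?_
    rw [Finset.sum_comm]
    refine Finset.sum_congr rfl fun t _ => ?_
    refine Finset.sum_congr rfl fun r _ => ?_
    ring
  have hval : star (prodVec x y) ⬝ᵥ A.mulVec (prodVec x y) = star x ⬝ᵥ Cy.mulVec x := by
    simp only [dotProduct, mulVec, prodVec, Pi.star_apply, Fintype.sum_prod_type, hC,
      starRingEnd_apply, star_mul', Finset.mul_sum, Finset.sum_mul]
    refine Finset.sum_congr rfl fun i _ => ?_
    rw [Finset.sum_comm]
    refine Finset.sum_congr rfl fun j _ => ?_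
    refine Finset.sum_congr rfl fun s _ => ?_
    refine Finset.sum_congr rfl fun t _ => ?_
    ring
  rw [hval, hx2, hCtr, hy2, hBtr, div_div]
  congr 1
  push_cast
  ring
end

section
/- If A₁ is an operator on C^K and A₂ an operator on C^M, and 0 belongs to the numerical range of A₁ or of A₂, then the product numerical range Λ⊗(A₁ ⊗ A₂) is star-shaped with respect to 0. -/
open Matrix Complex Kronecker Pointwise

/-! Since `⟨x ⊗ y, (A₁ ⊗ A₂)(x ⊗ y)⟩ = ⟨x, A₁ x⟩ ⟨y, A₂ y⟩`, the product numerical range is the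
Minkowski product `Λ(A₁) Λ(A₂)`. By the Toeplitz–Hausdorff theorem a numerical range is convex,
so one containing `0` is star-shaped about `0`, and then so is the product.

Convexity reduces, after subtracting a scalar from `A`, to `t a ∈ Λ(A)` for `t ∈ [0, 1]` when
`⟨u, A u⟩ = 0` and `⟨v, A v⟩ = a ≠ 0`. Rotating `u` by a phase makes the cross term
`⟨u, A v⟩ + ⟨v, A u⟩` a real multiple of `a`; then the Rayleigh quotient along the segment from
`u` to `v` is `a` times a real continuous function going from `0` to `1`, and the intermediate
value theorem gives the point. -/

section Vectors

open scoped ComplexOrder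

variable {n : Type*} [Fintype n]

lemma star_smul_dotProduct_mulVec_smul (B : Matrix n n ℂ) (c : ℂ) (x : n → ℂ) :
    star (c • x) ⬝ᵥ B *ᵥ (c • x) = star c * c * (star x ⬝ᵥ B *ᵥ x) := by
  rw [star_smul, mulVec_smul, smul_dotProduct, dotProduct_smul, smul_eq_mul, smul_eq_mul, mul_assoc]

lemma ofReal_re_dotProduct_star_self (x : n → ℂ) : ((star x ⬝ᵥ x).re : ℂ) = star x ⬝ᵥ x :=
  Complex.ext rfl (Complex.nonneg_iff.1 (dotProduct_star_self_nonneg x)).2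

lemma dotProduct_star_self_re_pos {x : n → ℂ} (hx : x ≠ 0) : 0 < (star x ⬝ᵥ x).re :=
  (Complex.pos_iff.1 (dotProduct_star_self_pos_iff.2 hx)).1

end Vectors

lemma div_mem_nr {N : ℕ} (A : Matrix (Fin N) (Fin N) ℂ) {x : Fin N → ℂ} (hx : x ≠ 0) :
    (star x ⬝ᵥ A *ᵥ x) / (star x ⬝ᵥ x) ∈ nr A := by
  set r := (star x ⬝ᵥ x).re
  have hr : 0 < r := dotProduct_star_self_re_pos hx
  have hc : star ((√r)⁻¹ : ℂ) * ((√r)⁻¹ : ℂ) = (r : ℂ)⁻¹ := by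
    rw [Complex.star_def, Complex.conj_inv, Complex.conj_ofReal, ← mul_inv, ← Complex.ofReal_mul,
      Real.mul_self_sqrt hr.le]
  refine ⟨((√r)⁻¹ : ℂ) • x, ?_, ?_⟩
  · have h := star_smul_dotProduct_mulVec_smul 1 ((√r)⁻¹ : ℂ) x
    rw [one_mulVec, one_mulVec, hc] at h
    rw [h, ← ofReal_re_dotProduct_star_self x, inv_mul_cancel₀ (Complex.ofReal_ne_zero.2 hr.ne')]
  · rw [star_smul_dotProduct_mulVec_smul, hc, ofReal_re_dotProduct_star_self, inv_mul_eq_div]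

lemma exists_norm_eq_one_im_star_mul_add_mul_eq_zero (c d : ℂ) :
    ∃ e : ℂ, ‖e‖ = 1 ∧ (star e * c + e * d).im = 0 := by
  set w := d - star c
  set e := Complex.exp (↑(-w.arg) * Complex.I)
  have hew : e * w = ‖w‖ := by
    conv_lhs => rw [← Complex.norm_mul_exp_arg_mul_I w]
    rw [mul_left_comm, ← Complex.exp_add, Complex.ofReal_neg, neg_mul, neg_add_cancel,
      Complex.exp_zero, mul_one]
  refine ⟨e, Complex.norm_exp_ofReal_mul_I _, ?_⟩
  have him : (star e * c + e * d).im = (e * w).im := by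
    simp only [w, Complex.add_im, Complex.mul_im, Complex.sub_im, Complex.sub_re,
      Complex.star_def, Complex.conj_re, Complex.conj_im]
    ring
  rw [him, hew, Complex.ofReal_im]

lemma ofReal_mul_mem_nr_of_cross_eq {N : ℕ} (A : Matrix (Fin N) (Fin N) ℂ) {u v : Fin N → ℂ}
    {a : ℂ} {w : ℝ} (hu : star u ⬝ᵥ u = 1) (hu0 : star u ⬝ᵥ A *ᵥ u = 0)
    (hv : star v ⬝ᵥ v = 1) (hva : star v ⬝ᵥ A *ᵥ v = a) (ha : a ≠ 0)
    (hw : star u ⬝ᵥ A *ᵥ v + star v ⬝ᵥ A *ᵥ u = a * w) {t : ℝ} (ht : t ∈ Set.Icc 0 1) :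
    (t : ℂ) * a ∈ nr A := by
  set ψ : ℝ → Fin N → ℂ := fun s => ((1 - s : ℝ) : ℂ) • u + (s : ℂ) • v
  have hq (s : ℝ) : star (ψ s) ⬝ᵥ A *ᵥ ψ s = a * (s ^ 2 + s * (1 - s) * w : ℝ) := by
    simp only [ψ, star_add, star_smul, mulVec_add, mulVec_smul, add_dotProduct, dotProduct_add,
      smul_dotProduct, dotProduct_smul, smul_eq_mul, Complex.star_def, Complex.conj_ofReal, hu0,
      hva]
    push_cast
    linear_combination ((1 - s : ℂ) * s) * hw
  have hψ (s : ℝ) (hs : s ∈ Set.Icc 0 1) : ψ s ≠ 0 := by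
    intro h0
    have hs0 : s = 0 := by
      have h := congrArg (fun x => star x ⬝ᵥ A *ᵥ x) (eq_neg_of_add_eq_zero_right h0)
      simp only [← neg_smul, star_smul_dotProduct_mulVec_smul, hu0, hva, mul_zero] at h
      simpa [ha] using h
    simp [ψ, hs0] at h0
    simp [h0] at hu
  set h : ℝ → ℝ := fun s => (s ^ 2 + s * (1 - s) * w) / (star (ψ s) ⬝ᵥ ψ s).re
  have hρ (s : ℝ) : (star (ψ s) ⬝ᵥ A *ᵥ ψ s) / (star (ψ s) ⬝ᵥ ψ s) = h s * a := by
    rw [hq, ← ofReal_re_dotProduct_star_self]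
    push_cast [h]
    ring
  have hcont : ContinuousOn h (Set.Icc 0 1) := by
    refine ContinuousOn.div (by fun_prop) ?_ fun s hs => (dotProduct_star_self_re_pos (hψ s hs)).ne'
    exact (Complex.continuous_re.comp (by fun_prop)).continuousOn
  obtain ⟨s, hs, hst⟩ := intermediate_value_Icc zero_le_one hcont (by simpa [h, ψ, hv] using ht)
  rw [← hst, ← hρ]
  exact div_mem_nr A (hψ s hs)

lemma ofReal_mul_mem_nr {N : ℕ} {A : Matrix (Fin N) (Fin N) ℂ} {a : ℂ} (h0 : 0 ∈ nr A)
    (ha : a ∈ nr A) {t : ℝ} (ht : t ∈ Set.Icc 0 1) : (t : ℂ) * a ∈ nr A := by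
  obtain rfl | ha0 := eq_or_ne a 0
  · rwa [mul_zero]
  obtain ⟨u, hu, hu0⟩ := h0
  obtain ⟨v, hv, hva⟩ := ha
  obtain ⟨e, he, him⟩ := exists_norm_eq_one_im_star_mul_add_mul_eq_zero
    (star u ⬝ᵥ A *ᵥ v / a) (star v ⬝ᵥ A *ᵥ u / a)
  set z := star e * (star u ⬝ᵥ A *ᵥ v / a) + e * (star v ⬝ᵥ A *ᵥ u / a) with hz
  have hz_real : (z.re : ℂ) = z := Complex.ext rfl him.symm
  have hee : star e * e = 1 := by
    rw [Complex.star_def, Complex.conj_mul', he, Complex.ofReal_one, one_pow]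
  refine ofReal_mul_mem_nr_of_cross_eq A (u := e • u) (w := z.re) ?_ ?_ hv hva ha0 ?_ ht
  · have h := star_smul_dotProduct_mulVec_smul 1 e u
    rwa [one_mulVec, one_mulVec, hee, one_mul, hu] at h
  · rw [star_smul_dotProduct_mulVec_smul, hu0, mul_zero]
  · rw [hz_real, hz]
    simp only [star_smul, mulVec_smul, smul_dotProduct, dotProduct_smul, smul_eq_mul]
    field_simp

lemma mem_nr_sub_smul_one_iff {N : ℕ} (A : Matrix (Fin N) (Fin N) ℂ) (c z : ℂ) :
    z ∈ nr (A - c • 1) ↔ z + c ∈ nr A := by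
  have key (x : Fin N → ℂ) (hx : star x ⬝ᵥ x = 1) :
      star x ⬝ᵥ (A - c • 1) *ᵥ x = star x ⬝ᵥ A *ᵥ x - c := by
    rw [sub_mulVec, smul_mulVec, one_mulVec, dotProduct_sub, dotProduct_smul, hx, smul_eq_mul,
      mul_one]
  simp only [nr, Set.mem_ofPred_eq]
  exact exists_congr fun x => and_congr_right fun hx => by rw [key x hx, sub_eq_iff_eq_add]

theorem convex_nr {N : ℕ} (A : Matrix (Fin N) (Fin N) ℂ) : Convex ℝ (nr A) := by
  intro a ha b hb α β hα hβ hαβ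
  have h0 : (0 : ℂ) ∈ nr (A - a • 1) := (mem_nr_sub_smul_one_iff A a 0).2 (by rwa [zero_add])
  have hb' : b - a ∈ nr (A - a • 1) := (mem_nr_sub_smul_one_iff A a _).2 (by rwa [sub_add_cancel])
  have h := (mem_nr_sub_smul_one_iff A a _).1 (ofReal_mul_mem_nr h0 hb' ⟨hβ, by linarith⟩)
  obtain rfl : α = 1 - β := by linarith
  convert h using 1
  simp only [Complex.real_smul]
  push_cast
  ring

lemma star_prodVec {K M : ℕ} (x : Fin K → ℂ) (y : Fin M → ℂ) :
    star (prodVec x y) = prodVec (star x) (star y) :=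
  funext fun _ => star_mul' _ _

lemma prodVec_dotProduct_prodVec {K M : ℕ} (x x' : Fin K → ℂ) (y y' : Fin M → ℂ) :
    prodVec x y ⬝ᵥ prodVec x' y' = (x ⬝ᵥ x') * (y ⬝ᵥ y') := by
  simp only [dotProduct, prodVec, Fintype.sum_prod_type, Finset.sum_mul_sum]
  exact Finset.sum_congr rfl fun _ _ => Finset.sum_congr rfl fun _ _ => mul_mul_mul_comm _ _ _ _

lemma kronecker_mulVec_prodVec {K M : ℕ} (A₁ : Matrix (Fin K) (Fin K) ℂ)
    (A₂ : Matrix (Fin M) (Fin M) ℂ) (x : Fin K → ℂ) (y : Fin M → ℂ) :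
    (A₁ ⊗ₖ A₂) *ᵥ prodVec x y = prodVec (A₁ *ᵥ x) (A₂ *ᵥ y) :=
  funext fun p => prodVec_dotProduct_prodVec (A₁ p.1) x (A₂ p.2) y

lemma star_prodVec_dotProduct_kronecker_mulVec_prodVec {K M : ℕ} (A₁ : Matrix (Fin K) (Fin K) ℂ)
    (A₂ : Matrix (Fin M) (Fin M) ℂ) (x : Fin K → ℂ) (y : Fin M → ℂ) :
    star (prodVec x y) ⬝ᵥ (A₁ ⊗ₖ A₂) *ᵥ prodVec x y
      = (star x ⬝ᵥ A₁ *ᵥ x) * (star y ⬝ᵥ A₂ *ᵥ y) := by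
  rw [kronecker_mulVec_prodVec, star_prodVec, prodVec_dotProduct_prodVec]

theorem pnr_kronecker {K M : ℕ} (A₁ : Matrix (Fin K) (Fin K) ℂ) (A₂ : Matrix (Fin M) (Fin M) ℂ) :
    pnr (A₁ ⊗ₖ A₂) = nr A₁ * nr A₂ := by
  ext z
  simp only [pnr, nr, Set.mem_mul, Set.mem_ofPred_eq,
    star_prodVec_dotProduct_kronecker_mulVec_prodVec]
  constructor
  · rintro ⟨x, y, hx, hy, rfl⟩
    exact ⟨_, ⟨x, hx, rfl⟩, _, ⟨y, hy, rfl⟩, rfl⟩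
  · rintro ⟨_, ⟨x, hx, rfl⟩, _, ⟨y, hy, rfl⟩, rfl⟩
    exact ⟨x, y, hx, hy, rfl⟩

theorem pnr_kronecker_starShaped {K M : ℕ}
    (A₁ : Matrix (Fin K) (Fin K) ℂ) (A₂ : Matrix (Fin M) (Fin M) ℂ)
    (h0 : 0 ∈ nr A₁ ∨ 0 ∈ nr A₂) :
    ∀ s ∈ pnr (A₁ ⊗ₖ A₂), ∀ t : ℝ, 0 ≤ t → t ≤ 1 →
      (t : ℂ) * s ∈ pnr (A₁ ⊗ₖ A₂) := by
  intro s hs t ht0 ht1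
  rw [pnr_kronecker] at hs ⊢
  obtain ⟨z₁, hz₁, z₂, hz₂, rfl⟩ := hs
  rcases h0 with h0 | h0
  · have h := (convex_nr A₁).smul_mem_of_zero_mem h0 hz₁ ⟨ht0, ht1⟩
    exact ⟨_, h, z₂, hz₂, by rw [Complex.real_smul]; exact mul_assoc _ _ _⟩
  · have h := (convex_nr A₂).smul_mem_of_zero_mem h0 hz₂ ⟨ht0, ht1⟩
    exact ⟨z₁, hz₁, _, h, by rw [Complex.real_smul]; exact mul_left_comm _ _ _⟩
end

section
/- For a Hermitian operator X on C^K ⊗ C^M, the product numerical range Λ⊗(X) is a convex subset of the real line (an interval). -/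
/-!
The product numerical range is the image of the product of two unit spheres under the continuous
map `(x, y) ↦ ⟨x ⊗ y, X (x ⊗ y)⟩`. Unit spheres of complex spaces are connected (or empty), so the
range is connected; for Hermitian `X` it lies on the real line, where connected sets are intervals.
-/

open Matrix Complex Kronecker Pointwise

theorem isPreconnected_sphere_of_complex {E : Type*} [NormedAddCommGroup E] [NormedSpace ℂ E]
    (x : E) (r : ℝ) : IsPreconnected (Metric.sphere x r) := by
  rcases subsingleton_or_nontrivial E with _ | _
  · exact (Set.subsingleton_of_subsingleton).isPreconnected
  · refine isPreconnected_sphere ?_ x r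
    have h := lift_rank_mul_lift_rank ℝ ℂ E
    rw [Complex.rank_real_complex, Cardinal.lift_ofNat, Cardinal.lift_uzero,
      Cardinal.lift_uzero] at h
    rw [← h]
    calc (1 : Cardinal) < 2 := by norm_num
      _ ≤ 2 * Module.rank ℂ E :=
          le_mul_of_one_le_right' (Cardinal.one_le_iff_ne_zero.mpr rank_pos.ne')

theorem EuclideanSpace.mem_sphere_zero_one_iff {ι : Type*} [Fintype ι] (x : EuclideanSpace ℂ ι) :
    x ∈ Metric.sphere 0 1 ↔ star (WithLp.ofLp x) ⬝ᵥ WithLp.ofLp x = 1 := by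
  rw [dotProduct_comm, ← EuclideanSpace.inner_eq_star_dotProduct, inner_self_eq_norm_sq_to_K,
    mem_sphere_zero_iff_norm, ← RCLike.ofReal_pow, ← RCLike.ofReal_one (K := ℂ), RCLike.ofReal_inj,
    pow_eq_one_iff_of_nonneg (norm_nonneg x) two_ne_zero]

theorem Complex.convex_of_isPreconnected_of_im_eq_zero {s : Set ℂ} (hs : IsPreconnected s)
    (him : ∀ z ∈ s, z.im = 0) : Convex ℝ s := by
  have hs_eq : s = ofRealCLM '' (re '' s) := by
    rw [Set.image_image]
    refine (Set.image_congr fun z hz => ?_).trans (Set.image_id s) |>.symm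
    exact Complex.ext rfl (him z hz).symm
  rw [hs_eq]
  exact (hs.image _ continuous_re.continuousOn).convex.linear_image ofRealCLM.toLinearMap

theorem im_eq_zero_of_mem_pnr {K M : ℕ} {X : Matrix (Fin K × Fin M) (Fin K × Fin M) ℂ}
    (hX : X.IsHermitian) {z : ℂ} (hz : z ∈ pnr X) : z.im = 0 := by
  obtain ⟨x, y, -, -, rfl⟩ := hz
  exact hX.im_star_dotProduct_mulVec_self _

theorem pnr_eq_image_sphere_prod {K M : ℕ} (X : Matrix (Fin K × Fin M) (Fin K × Fin M) ℂ) :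
    pnr X = (fun p : EuclideanSpace ℂ (Fin K) × EuclideanSpace ℂ (Fin M) =>
        star (prodVec p.1.ofLp p.2.ofLp) ⬝ᵥ X *ᵥ prodVec p.1.ofLp p.2.ofLp) ''
      (Metric.sphere 0 1 ×ˢ Metric.sphere 0 1) := by
  ext z
  simp only [Set.mem_image, Set.mem_prod, EuclideanSpace.mem_sphere_zero_one_iff, Prod.exists]
  constructor
  · rintro ⟨x, y, hx, hy, rfl⟩
    exact ⟨WithLp.toLp 2 x, WithLp.toLp 2 y, ⟨hx, hy⟩, rfl⟩
  · rintro ⟨x, y, ⟨hx, hy⟩, rfl⟩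
    exact ⟨x.ofLp, y.ofLp, hx, hy, rfl⟩

theorem isPreconnected_pnr {K M : ℕ} (X : Matrix (Fin K × Fin M) (Fin K × Fin M) ℂ) :
    IsPreconnected (pnr X) := by
  rw [pnr_eq_image_sphere_prod]
  refine ((isPreconnected_sphere_of_complex 0 1).prod
    (isPreconnected_sphere_of_complex 0 1)).image _ (Continuous.continuousOn ?_)
  simp only [dotProduct, mulVec, prodVec, Pi.star_apply]
  fun_prop

theorem pnr_hermitian_convex_real {K M : ℕ}
    (X : Matrix (Fin K × Fin M) (Fin K × Fin M) ℂ) (hX : X.IsHermitian) :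
    (∀ z ∈ pnr X, z.im = 0) ∧ Convex ℝ (pnr X) :=
  ⟨fun _ => im_eq_zero_of_mem_pnr hX,
    Complex.convex_of_isPreconnected_of_im_eq_zero (isPreconnected_pnr X)
      fun _ => im_eq_zero_of_mem_pnr hX⟩
end

section
/- The product numerical range Λ⊗(X) of an operator X on C^K ⊗ C^M reduces to a single point λ if and only if X = λ·I. -/
/-!
Subtracting `λ • 1`, it suffices to show that an operator `Y` with `⟨x ⊗ y, Y (x ⊗ y)⟩ = 0` for
all unit `x`, `y` vanishes. For fixed `y` this quantity is `⟨x, Y_y x⟩`, where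
`Y_y = (1 ⊗ ⟨y|) Y (1 ⊗ |y⟩)`; over `ℂ` a matrix with numerical range `{0}` is zero (polarization),
so every `Y_y` vanishes. The entries of `Y_y` are `⟨y, Y_ij y⟩` for the `M × M` blocks `Y_ij` of
`Y`, so the same fact applied to each block gives `Y = 0`.
-/

open Matrix Complex Kronecker Pointwise

theorem Matrix.eq_zero_of_forall_star_dotProduct_mulVec_self_eq_zero {n : Type*} [Fintype n]
    [DecidableEq n] (A : Matrix n n ℂ)
    (h : ∀ x : n → ℂ, star x ⬝ᵥ x = 1 → star x ⬝ᵥ A *ᵥ x = 0) : A = 0 := by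
  have inner_eq (v : EuclideanSpace ℂ n) :
      inner ℂ v (toLpLin 2 2 A v) = star v.ofLp ⬝ᵥ A *ᵥ v.ofLp := by
    rw [EuclideanSpace.inner_eq_star_dotProduct, dotProduct_comm]; rfl
  have on_sphere (u : EuclideanSpace ℂ n) (hu : ‖u‖ = 1) : inner ℂ u (toLpLin 2 2 A u) = 0 := by
    have hu' := inner_self_eq_norm_sq_to_K (𝕜 := ℂ) u
    rw [hu, EuclideanSpace.inner_eq_star_dotProduct, dotProduct_comm] at hu'
    exact (inner_eq u).trans (h _ (by simpa using hu'))
  apply (toLpLin 2 2).injective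
  rw [map_zero, ← inner_map_self_eq_zero]
  intro v
  rw [← inner_conj_symm, map_eq_zero]
  rcases eq_or_ne v 0 with rfl | hv
  · simp
  set u : EuclideanSpace ℂ n := (‖v‖ : ℂ)⁻¹ • v with hu
  have hv' : v = (‖v‖ : ℂ) • u := by
    rw [hu, smul_smul, mul_inv_cancel₀ (by simpa using hv), one_smul]
  have hu1 : ‖u‖ = 1 := by simp [hu, norm_smul, hv]
  rw [hv', map_smul, inner_smul_left, inner_smul_right, on_sphere u hu1, mul_zero, mul_zero]

theorem exists_star_dotProduct_self_eq_one {n : Type*} [Fintype n] [DecidableEq n] [Nonempty n] :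
    ∃ x : n → ℂ, star x ⬝ᵥ x = 1 := by
  obtain ⟨i⟩ := ‹Nonempty n›
  exact ⟨Pi.single i 1, by simp⟩

theorem star_dotProduct_smul_one_mulVec {n : Type*} [Fintype n] [DecidableEq n] {x : n → ℂ}
    (hx : star x ⬝ᵥ x = 1) (c : ℂ) : star x ⬝ᵥ (c • 1 : Matrix n n ℂ) *ᵥ x = c := by
  rw [smul_mulVec, one_mulVec, dotProduct_smul, hx, smul_eq_mul, mul_one]

/-- The operator `(1 ⊗ ⟨y|) Y (1 ⊗ |y⟩)` on the first tensor factor. -/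
def partialCompression {I J : Type*} [Fintype J] (Y : Matrix (I × J) (I × J) ℂ) (y : J → ℂ) :
    Matrix I I ℂ :=
  of fun i i' => star y ⬝ᵥ (Matrix.comp I I J J ℂ).symm Y i i' *ᵥ y

theorem star_prodVec_dotProduct_prodVec {K M : ℕ} (x : Fin K → ℂ) (y : Fin M → ℂ) :
    star (prodVec x y) ⬝ᵥ prodVec x y = (star x ⬝ᵥ x) * (star y ⬝ᵥ y) := by
  simp only [dotProduct, prodVec, Pi.star_apply, star_mul', Finset.sum_mul_sum,
    Fintype.sum_prod_type]
  exact Finset.sum_congr rfl fun i _ => Finset.sum_congr rfl fun j _ => by ring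

theorem star_prodVec_dotProduct_mulVec_prodVec {K M : ℕ}
    (Y : Matrix (Fin K × Fin M) (Fin K × Fin M) ℂ) (x : Fin K → ℂ) (y : Fin M → ℂ) :
    star (prodVec x y) ⬝ᵥ Y *ᵥ prodVec x y = star x ⬝ᵥ partialCompression Y y *ᵥ x := by
  simp only [dotProduct, mulVec, prodVec, partialCompression, Pi.star_apply, star_mul',
    Fintype.sum_prod_type, Finset.mul_sum, Finset.sum_mul, of_apply, comp_symm_apply]
  refine Finset.sum_congr rfl fun i _ => ?_
  rw [Finset.sum_comm]
  refine Finset.sum_congr rfl fun k _ => Finset.sum_congr rfl fun j _ => ?_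
  exact Finset.sum_congr rfl fun l _ => by ring

theorem eq_zero_of_forall_star_prodVec_dotProduct_mulVec_prodVec {K M : ℕ}
    (Y : Matrix (Fin K × Fin M) (Fin K × Fin M) ℂ)
    (h : ∀ x y, star x ⬝ᵥ x = 1 → star y ⬝ᵥ y = 1 →
      star (prodVec x y) ⬝ᵥ Y *ᵥ prodVec x y = 0) : Y = 0 := by
  have compression_eq_zero (y : Fin M → ℂ) (hy : star y ⬝ᵥ y = 1) :
      partialCompression Y y = 0 :=
    eq_zero_of_forall_star_dotProduct_mulVec_self_eq_zero _ fun x hx =>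
      (star_prodVec_dotProduct_mulVec_prodVec Y x y).symm.trans (h x y hx hy)
  have block_eq_zero (i j : Fin K) : (Matrix.comp _ _ _ _ ℂ).symm Y i j = 0 :=
    eq_zero_of_forall_star_dotProduct_mulVec_self_eq_zero _ fun y hy =>
      congrFun₂ (compression_eq_zero y hy) i j
  ext ⟨i, k⟩ ⟨j, l⟩
  exact congrFun₂ (block_eq_zero i j) k l

theorem pnr_singleton_iff {K M : ℕ} (hK : 0 < K) (hM : 0 < M)
    (X : Matrix (Fin K × Fin M) (Fin K × Fin M) ℂ) (lam : ℂ) :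
    pnr X = {lam} ↔ X = lam • (1 : Matrix (Fin K × Fin M) (Fin K × Fin M) ℂ) := by
  have prodVec_unit (x : Fin K → ℂ) (y : Fin M → ℂ) (hx : star x ⬝ᵥ x = 1)
      (hy : star y ⬝ᵥ y = 1) : star (prodVec x y) ⬝ᵥ prodVec x y = 1 := by
    rw [star_prodVec_dotProduct_prodVec, hx, hy, one_mul]
  constructor
  · intro h
    rw [← sub_eq_zero]
    refine eq_zero_of_forall_star_prodVec_dotProduct_mulVec_prodVec _ fun x y hx hy => ?_
    have hmem : star (prodVec x y) ⬝ᵥ X *ᵥ prodVec x y ∈ pnr X := ⟨x, y, hx, hy, rfl⟩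
    rw [h, Set.mem_singleton_iff] at hmem
    rw [sub_mulVec, dotProduct_sub, hmem,
      star_dotProduct_smul_one_mulVec (prodVec_unit x y hx hy), sub_self]
  · rintro rfl
    have : Nonempty (Fin K) := ⟨⟨0, hK⟩⟩
    have : Nonempty (Fin M) := ⟨⟨0, hM⟩⟩
    obtain ⟨x, hx⟩ := exists_star_dotProduct_self_eq_one (n := Fin K)
    obtain ⟨y, hy⟩ := exists_star_dotProduct_self_eq_one (n := Fin M)
    refine Set.eq_singleton_iff_unique_mem.2
      ⟨⟨x, y, hx, hy, star_dotProduct_smul_one_mulVec (prodVec_unit x y hx hy) lam⟩, ?_⟩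
    rintro _ ⟨x, y, hx, hy, rfl⟩
    exact star_dotProduct_smul_one_mulVec (prodVec_unit x y hx hy) lam
end

section
/- For all K, M ≥ 1 there exists a subspace of C^K ⊗ C^M of dimension (K−1)(M−1) containing no nonzero product vector. Concretely, the span of the vectorizations of the matrices A^{(ij)} = E^{(ij)} + E^{(i+1,j+1)}, 1 ≤ i ≤ K−1, 1 ≤ j ≤ M−1, contains no nonzero vector of the form x ⊗ y. -/
open Matrix Complex Kronecker Pointwise

open Polynomial in
/-- Auxiliary linear map: alternating diagonal generating polynomial. -/
noncomputable def Pmap (K M : ℕ) : (Fin (K+1) × Fin (M+1) → ℂ) →ₗ[ℂ] Polynomial ℂ where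
  toFun w := ∑ p : Fin (K+1) × Fin (M+1),
    C (w p * (-1:ℂ)^(p.1:ℕ)) * X ^ ((p.1:ℕ) + (M - (p.2:ℕ)))
  map_add' w w' := by
    simp [add_mul, Finset.sum_add_distrib]
  map_smul' a w := by
    simp [Finset.mul_sum, mul_assoc, Polynomial.smul_eq_C_mul]

open Polynomial in
lemma Pmap_single (K M : ℕ) (p : Fin (K+1) × Fin (M+1)) :
    Pmap K M (fun p' => if p' = p then 1 else 0) =
      C ((-1:ℂ)^(p.1:ℕ)) * X ^ ((p.1:ℕ) + (M - (p.2:ℕ))) := by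
  simp only [Pmap, LinearMap.coe_mk, AddHom.coe_mk]
  rw [Finset.sum_eq_single p]
  · simp
  · intro q _ hq; simp [hq]
  · simp

lemma Pmap_v (K M : ℕ) (q : Fin K × Fin M) :
    Pmap K M ((fun p => if p = (q.1.castSucc, q.2.castSucc) then 1 else 0) +
      (fun p => if p = (q.1.succ, q.2.succ) then 1 else 0)) = 0 := by
  rw [map_add, Pmap_single, Pmap_single]
  have h1 : ((q.1.succ : Fin (K+1)) : ℕ) = (q.1 : ℕ) + 1 := rfl
  have h2 : ((q.2.succ : Fin (M+1)) : ℕ) = (q.2 : ℕ) + 1 := rfl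
  have h3 : ((q.1.castSucc : Fin (K+1)) : ℕ) = (q.1 : ℕ) := rfl
  have h4 : ((q.2.castSucc : Fin (M+1)) : ℕ) = (q.2 : ℕ) := rfl
  rw [h1, h2, h3, h4]
  have hM : (q.2 : ℕ) + 1 ≤ M := q.2.2
  have he : (q.1 : ℕ) + 1 + (M - ((q.2:ℕ)+1)) = (q.1 : ℕ) + (M - (q.2:ℕ)) := by omega
  rw [he, pow_succ]
  simp only [_root_.map_mul, _root_.map_neg, _root_.map_one]
  ring

open Polynomial in
lemma Pmap_prodVec (K M : ℕ) (x : Fin (K+1) → ℂ) (y : Fin (M+1) → ℂ) :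
    Pmap K M (prodVec x y) =
      (∑ i : Fin (K+1), C (x i * (-1:ℂ)^(i:ℕ)) * X ^ (i:ℕ)) *
      (∑ j : Fin (M+1), C (y j) * X ^ (M - (j:ℕ))) := by
  simp only [Pmap, LinearMap.coe_mk, AddHom.coe_mk, prodVec, Finset.sum_mul_sum,
    Fintype.sum_prod_type]
  refine Finset.sum_congr rfl fun i _ => Finset.sum_congr rfl fun j _ => ?_
  rw [pow_add]
  simp [_root_.map_mul]
  ring

open Polynomial in
lemma coeffX (K : ℕ) (x : Fin (K+1) → ℂ)
    (h : (∑ i : Fin (K+1), C (x i * (-1:ℂ)^(i:ℕ)) * X ^ (i:ℕ)) = 0) : x = 0 := by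
  funext i0
  have := congrArg (fun p => Polynomial.coeff p (i0:ℕ)) h
  simp only [finset_sum_coeff, coeff_C_mul, coeff_X_pow, coeff_zero, mul_ite, mul_one,
    mul_zero] at this
  rw [Finset.sum_eq_single i0] at this
  · simp only [if_pos rfl] at this
    have h2 : ((-1:ℂ)^(i0:ℕ)) ≠ 0 := by
      apply pow_ne_zero; norm_num
    have := mul_eq_zero.mp this
    simp [h2] at this
    simpa using this
  · intro b _ hb
    rw [if_neg]
    exact fun hc => hb (Fin.ext hc.symm)
  · simp

open Polynomial in
lemma coeffY (M : ℕ) (y : Fin (M+1) → ℂ)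
    (h : (∑ j : Fin (M+1), C (y j) * X ^ (M - (j:ℕ))) = 0) : y = 0 := by
  funext j0
  have := congrArg (fun p => Polynomial.coeff p (M - (j0:ℕ))) h
  simp only [finset_sum_coeff, coeff_C_mul, coeff_X_pow, coeff_zero, mul_ite, mul_one,
    mul_zero] at this
  rw [Finset.sum_eq_single j0] at this
  · simpa using this
  · intro b _ hb
    rw [if_neg]
    intro hc
    apply hb
    have hb' : (b:ℕ) ≤ M := Nat.lt_succ_iff.mp b.2
    have hj' : (j0:ℕ) ≤ M := Nat.lt_succ_iff.mp j0.2
    exact Fin.ext (by omega)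
  · simp

set_option linter.unnecessarySeqFocus false in
lemma indepAux (K M : ℕ) :
    LinearIndependent ℂ (fun q : Fin K × Fin M =>
      ((fun p => if p = (q.1.castSucc, q.2.castSucc) then 1 else 0) +
       (fun p => if p = (q.1.succ, q.2.succ) then 1 else 0) :
        Fin (K + 1) × Fin (M + 1) → ℂ)) := by
  rw [Fintype.linearIndependent_iff]
  intro c hc q0
  have E : ∀ (i : Fin K) (j : Fin M),
      c (i, j) + ∑ q : Fin K × Fin M,
        c q * (if (i.castSucc, j.castSucc) = (q.1.succ, q.2.succ) then (1:ℂ) else 0) = 0 := by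
    intro i j
    have := congrFun hc (i.castSucc, j.castSucc)
    simp only [Finset.sum_apply, Pi.smul_apply, Pi.add_apply, smul_eq_mul, Pi.zero_apply] at this
    rw [Finset.sum_congr rfl (fun q _ => mul_add (c q) _ _), Finset.sum_add_distrib] at this
    rw [Finset.sum_eq_single (i, j)] at this
    · simpa using this
    · intro b _ hb
      rw [if_neg, mul_zero]
      intro hcon
      apply hb
      obtain ⟨h1, h2⟩ := Prod.mk.injEq .. ▸ hcon
      exact Prod.ext (Fin.castSucc_injective _ h1.symm) (Fin.castSucc_injective _ h2.symm)
    · simp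
  have main : ∀ n : ℕ, ∀ (i : Fin K) (j : Fin M), (i : ℕ) = n → c (i, j) = 0 := by
    intro n
    induction n with
    | zero =>
      intro i j hi
      have := E i j
      rw [Finset.sum_eq_zero] at this
      · simpa using this
      · intro q _
        rw [if_neg, mul_zero]
        intro hcon
        have : (i.castSucc : ℕ) = (q.1.succ : ℕ) := congrArg (fun p => ((p.1 : Fin (K+1)) : ℕ)) hcon
        simp [Fin.val_succ, hi] at this
    | succ m ih =>
      intro i j hi
      rcases Nat.eq_zero_or_pos (j : ℕ) with hj | hj
      · have := E i j
        rw [Finset.sum_eq_zero] at this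
        · simpa using this
        · intro q _
          rw [if_neg, mul_zero]
          intro hcon
          have : (j.castSucc : ℕ) = (q.2.succ : ℕ) := congrArg (fun p => ((p.2 : Fin (M+1)) : ℕ)) hcon
          simp [Fin.val_succ, hj] at this
      · have hmK : m < K := by omega
        have hjM : (j:ℕ) - 1 < M := by omega
        have := E i j
        rw [Finset.sum_eq_single ((⟨m, hmK⟩, ⟨(j:ℕ)-1, hjM⟩) : Fin K × Fin M)] at this
        · rw [if_pos, mul_one] at this
          · rw [ih ⟨m, hmK⟩ ⟨(j:ℕ)-1, hjM⟩ rfl] at this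
            simpa using this
          · apply Prod.ext <;> apply Fin.ext <;> simp [Fin.val_succ, hi] <;> omega
        · intro b _ hb
          rw [if_neg, mul_zero]
          intro hcon
          apply hb
          obtain ⟨h1, h2⟩ := Prod.mk.injEq .. ▸ hcon
          have h1' : (i:ℕ) = (b.1:ℕ)+1 := by
            have := congrArg Fin.val h1; simpa using this
          have h2' : (j:ℕ) = (b.2:ℕ)+1 := by
            have := congrArg Fin.val h2; simpa using this
          apply Prod.ext <;> apply Fin.ext <;> simp <;> omega
        · simp
  exact main (q0.1 : ℕ) q0.1 q0.2 rfl

theorem completely_entangled_subspace (K M : ℕ) :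
    let v : Fin K × Fin M → (Fin (K + 1) × Fin (M + 1) → ℂ) := fun q =>
      (fun p => if p = (q.1.castSucc, q.2.castSucc) then 1 else 0) +
      (fun p => if p = (q.1.succ, q.2.succ) then 1 else 0)
    Module.finrank ℂ (Submodule.span ℂ (Set.range v)) = K * M ∧
      ∀ w ∈ Submodule.span ℂ (Set.range v), w ≠ 0 →
        ¬ ∃ (x : Fin (K + 1) → ℂ) (y : Fin (M + 1) → ℂ), w = prodVec x y := by
  intro v
  constructor
  · have hli : LinearIndependent ℂ v := indepAux K M
    rw [finrank_span_eq_card hli]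
    simp
  · rintro w hw hw0 ⟨x, y, rfl⟩
    have hP : Pmap K M (prodVec x y) = 0 := by
      have hle : Submodule.span ℂ (Set.range v) ≤ LinearMap.ker (Pmap K M) := by
        rw [Submodule.span_le]
        rintro _ ⟨q, rfl⟩
        exact Pmap_v K M q
      exact hle hw
    rw [Pmap_prodVec] at hP
    rcases mul_eq_zero.mp hP with h | h
    · apply hw0
      rw [coeffX K x h]
      funext p
      simp [prodVec]
    · apply hw0
      rw [coeffY M y h]
      funext p
      simp [prodVec]
end

section
/- Given K×M complex matrices A^{(ij)} = E^{(ij)} + E^{(i+1,j+1)} for 1 ≤ i < K, 1 ≤ j < M, every linear combination T = Σ α_{ij} A^{(ij)} which has rank one must be zero; i.e., no such nonzero linear combination has rank exactly one. -/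
/-!
If the combination `T` equals `u vᵀ`, pair it with the vectors `(s^p)_p` and `(t^q)_q`. The
generator `E^{(ij)} + E^{(i+1,j+1)}` contributes `sⁱ tʲ (1 + s t)`, which vanishes when `s t = -1`.
Hence `P(s) Q(-1/s) = 0` for every `s ≠ 0`, where `P` and `Q` are the polynomials with coefficient
vectors `u` and `v`; infinitely many roots force `P = 0` or `Q = 0`, that is `T = 0`.
-/

open Matrix Complex Kronecker Pointwise

open Polynomial

variable {R : Type*}

namespace Matrix

theorem exists_eq_vecMulVec_of_rank_eq_one {m n : Type*} [Fintype m] [Fintype n] [Field R]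
    {A : Matrix m n R} (h : A.rank = 1) : ∃ u : m → R, ∃ v : n → R, A = vecMulVec u v := by
  classical
  rw [rank, finrank_eq_one_iff'] at h
  obtain ⟨⟨w, _⟩, -, hspan⟩ := h
  choose c hc using fun q : n =>
    hspan ⟨A.col q, A.mulVec_single_one q ▸ LinearMap.mem_range_self _ _⟩
  refine ⟨w, c, ext fun p q => ?_⟩
  simpa [vecMulVec_apply, mul_comm] using (congrFun (congrArg Subtype.val (hc q)) p).symm

theorem dotProduct_vecMulVec_mulVec {m n : Type*} [Fintype m] [Fintype n] [CommSemiring R]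
    (x u : m → R) (v y : n → R) : x ⬝ᵥ (vecMulVec u v *ᵥ y) = (x ⬝ᵥ u) * (v ⬝ᵥ y) := by
  simp only [dotProduct, mulVec, vecMulVec_apply, Finset.sum_mul, Finset.mul_sum]
  rw [Finset.sum_comm]
  exact Finset.sum_congr rfl fun _ _ => Finset.sum_congr rfl fun _ _ => by ring

end Matrix

def powVec [Monoid R] (n : ℕ) (s : R) : Fin n → R := fun i => s ^ (i : ℕ)

theorem Polynomial.eval_ofFn [CommSemiring R] [DecidableEq R] {n : ℕ}
    (u : Fin n → R) (s : R) : (ofFn n u).eval s = powVec n s ⬝ᵥ u := by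
  simp [ofFn_eq_sum_monomial, eval_finsetSum, dotProduct, powVec, mul_comm]

theorem Polynomial.eq_zero_or_eq_zero_of_eval_mul_eval_neg_inv {F : Type*} [Field F]
    [Infinite F] {P Q : F[X]} (h : ∀ s ≠ 0, P.eval s * Q.eval (-s⁻¹) = 0) : P = 0 ∨ Q = 0 := by
  by_contra! hPQ
  have hinj : Function.Injective fun s : F => -s⁻¹ := neg_injective.comp inv_injective
  have hcover : {(0 : F)}ᶜ ⊆ {s | P.IsRoot s} ∪ (fun s => -s⁻¹) ⁻¹' {s | Q.IsRoot s} :=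
    fun s hs => mul_eq_zero.mp (h s hs)
  exact (Set.finite_singleton 0).infinite_compl <| ((finite_setOfPred_isRoot hPQ.1).union
    ((finite_setOfPred_isRoot hPQ.2).preimage hinj.injOn)).subset hcover

theorem powVec_dotProduct_single_mulVec_powVec [CommSemiring R] {m n : ℕ}
    (s t : R) (a : Fin m) (b : Fin n) :
    powVec m s ⬝ᵥ (single a b (1 : R) *ᵥ powVec n t) = s ^ (a : ℕ) * t ^ (b : ℕ) := by
  rw [single_mulVec]
  exact (dotProduct_single _ _ _).trans (by simp only [powVec, one_mul])

theorem powVec_dotProduct_single_add_single_mulVec_powVec [CommRing R] {K M : ℕ}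
    {s t : R} (hst : s * t = -1) (i : Fin K) (j : Fin M) :
    powVec (K + 1) s ⬝ᵥ ((single i.castSucc j.castSucc (1 : R) + single i.succ j.succ 1) *ᵥ
      powVec (M + 1) t) = 0 := by
  rw [add_mulVec, dotProduct_add, powVec_dotProduct_single_mulVec_powVec,
    powVec_dotProduct_single_mulVec_powVec, Fin.val_succ, Fin.val_succ, Fin.val_castSucc,
    Fin.val_castSucc]
  linear_combination (s ^ (i : ℕ) * t ^ (j : ℕ)) * hst

theorem powVec_dotProduct_sum_mulVec_powVec [CommRing R] {K M : ℕ}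
    (α : Fin K → Fin M → R) {s t : R} (hst : s * t = -1) :
    powVec (K + 1) s ⬝ᵥ ((∑ i : Fin K, ∑ j : Fin M,
      α i j • (single i.castSucc j.castSucc (1 : R) + single i.succ j.succ 1)) *ᵥ
        powVec (M + 1) t) = 0 := by
  simp only [sum_mulVec, smul_mulVec, dotProduct_sum, dotProduct_smul,
    powVec_dotProduct_single_add_single_mulVec_powVec hst, smul_zero, Finset.sum_const_zero]

theorem no_rank_one_combination (K M : ℕ) (α : Fin K → Fin M → ℂ) :
    Matrix.rank (∑ i : Fin K, ∑ j : Fin M,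
      α i j • (Matrix.single i.castSucc j.castSucc (1 : ℂ) +
        Matrix.single i.succ j.succ (1 : ℂ))) ≠ 1 := by
  intro hrank
  obtain ⟨u, v, huv⟩ := exists_eq_vecMulVec_of_rank_eq_one hrank
  have hvanish : ∀ s : ℂ, s ≠ 0 → (ofFn _ u).eval s * (ofFn _ v).eval (-s⁻¹) = 0 := by
    intro s hs
    rw [eval_ofFn, eval_ofFn, dotProduct_comm _ v, ← dotProduct_vecMulVec_mulVec, ← huv]
    exact powVec_dotProduct_sum_mulVec_powVec α (by field_simp)
  have hzero : vecMulVec u v = 0 := by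
    obtain rfl | rfl : u = 0 ∨ v = 0 := by
      simpa only [map_eq_zero_iff _ (injective_ofFn _)] using
        eq_zero_or_eq_zero_of_eval_mul_eval_neg_inv hvanish
    all_goals ext; simp [vecMulVec_apply]
  rw [huv, hzero, rank_zero] at hrank
  exact zero_ne_one hrank
end

section
/- Let A be an operator on C^{m₁} ⊗ … ⊗ C^{m_k} that is diagonal in the product computational basis, with diagonal entries λ_{l₁,…,l_k} = ⟨l₁…l_k| A |l₁…l_k⟩. Then Λ⊗(A) = { Σ_{l₁,…,l_k} p^{(1)}_{l₁} ⋯ p^{(k)}_{l_k} λ_{l₁,…,l_k} : each (p^{(r)}_0,…,p^{(r)}_{m_r−1}) is a probability vector }. -/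
open Matrix Complex

theorem pnr_diagonal_parametrization {k : ℕ} (m : Fin k → ℕ)
    (d : ((i : Fin k) → Fin (m i)) → ℂ) :
    {z : ℂ | ∃ x : (i : Fin k) → (Fin (m i) → ℂ),
        (∀ i, star (x i) ⬝ᵥ x i = 1) ∧
        star (fun l : (i : Fin k) → Fin (m i) => ∏ i, x i (l i)) ⬝ᵥ
          (Matrix.diagonal d).mulVec
            (fun l : (i : Fin k) → Fin (m i) => ∏ i, x i (l i)) = z} =
      {z : ℂ | ∃ p : (i : Fin k) → (Fin (m i) → ℝ),
        (∀ i l, 0 ≤ p i l) ∧ (∀ i, ∑ l, p i l = 1) ∧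
        z = ∑ l : (i : Fin k) → Fin (m i), (∏ i, (p i (l i) : ℂ)) * d l} := by
  ext z
  simp only [Set.mem_setOf_eq]
  constructor
  · rintro ⟨x, hx, rfl⟩
    refine ⟨fun i l => Complex.normSq (x i l), fun i l => Complex.normSq_nonneg _, ?_, ?_⟩
    · intro i
      have h := hx i
      simp only [dotProduct, Pi.star_apply] at h
      have h2 : ∑ l, ((Complex.normSq (x i l) : ℂ)) = 1 := by
        rw [← h]
        refine Finset.sum_congr rfl fun l _ => ?_
        rw [Complex.star_def, mul_comm, Complex.mul_conj]
      have := congrArg Complex.re h2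
      simpa [Complex.ofReal_re] using this
    · simp only [dotProduct, Pi.star_apply, Matrix.mulVec_diagonal]
      refine Finset.sum_congr rfl fun l _ => ?_
      rw [star_prod]
      have : (∏ i, star (x i (l i))) * (d l * ∏ i, x i (l i))
          = ((∏ i, star (x i (l i))) * ∏ i, x i (l i)) * d l := by ring
      rw [this, ← Finset.prod_mul_distrib]
      congr 1
      refine Finset.prod_congr rfl fun i _ => ?_
      rw [Complex.star_def, mul_comm, Complex.mul_conj]
  · rintro ⟨p, hp0, hp1, rfl⟩
    refine ⟨fun i l => (Real.sqrt (p i l) : ℂ), ?_, ?_⟩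
    · intro i
      simp only [dotProduct, Pi.star_apply, star_def, Complex.conj_ofReal,
        ← Complex.ofReal_mul, Real.mul_self_sqrt (hp0 i _)]
      rw [← Complex.ofReal_sum, hp1 i, Complex.ofReal_one]
    · simp only [dotProduct, Pi.star_apply, Matrix.mulVec_diagonal]
      refine Finset.sum_congr rfl fun l _ => ?_
      rw [star_prod]
      have : (∏ i, star ((Real.sqrt (p i (l i)) : ℂ))) *
          (d l * ∏ i, (Real.sqrt (p i (l i)) : ℂ))
          = ((∏ i, star ((Real.sqrt (p i (l i)) : ℂ))) *
            ∏ i, (Real.sqrt (p i (l i)) : ℂ)) * d l := by ring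
      rw [this, ← Finset.prod_mul_distrib]
      congr 1
      refine Finset.prod_congr rfl fun i _ => ?_
      rw [Complex.star_def, Complex.conj_ofReal, ← Complex.ofReal_mul,
        Real.mul_self_sqrt (hp0 i _)]
end

section
/- For the diagonal operator A = diag(1, 0, 0, i) on C² ⊗ C² (i.e., A = |00⟩⟨00| + i|11⟩⟨11| in the computational product basis), the product numerical range equals {x + yi : x ≥ 0, y ≥ 0, √x + √y ≤ 1}; in particular it is not convex, since 1 and i belong to it but (1+i)/2 does not. -/
open Matrix Complex Kronecker Pointwise

private lemma pnr_fwd_ineq (p q : ℝ) (hp : 0 ≤ p) (hp1 : p ≤ 1) (hq : 0 ≤ q) (hq1 : q ≤ 1) :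
    Real.sqrt (p * q) + Real.sqrt ((1 - p) * (1 - q)) ≤ 1 := by
  rw [Real.sqrt_mul hp, Real.sqrt_mul (by linarith : (0:ℝ) ≤ 1 - p)]
  nlinarith [sq_nonneg (Real.sqrt p - Real.sqrt q),
    sq_nonneg (Real.sqrt (1-p) - Real.sqrt (1-q)),
    Real.sq_sqrt hp, Real.sq_sqrt hq,
    Real.sq_sqrt (by linarith : (0:ℝ) ≤ 1 - p), Real.sq_sqrt (by linarith : (0:ℝ) ≤ 1 - q)]

private lemma pnr_converse (u v : ℝ) (hu : 0 ≤ u) (hv : 0 ≤ v)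
    (h : Real.sqrt u + Real.sqrt v ≤ 1) :
    ∃ p q : ℝ, 0 ≤ p ∧ p ≤ 1 ∧ 0 ≤ q ∧ q ≤ 1 ∧ p * q = u ∧ (1 - p) * (1 - q) = v := by
  set a := Real.sqrt u with ha
  set b := Real.sqrt v with hb
  have ha0 : 0 ≤ a := Real.sqrt_nonneg u
  have hb0 : 0 ≤ b := Real.sqrt_nonneg v
  have hua : a ^ 2 = u := Real.sq_sqrt hu
  have hvb : b ^ 2 = v := Real.sq_sqrt hv
  have ha1 : a ≤ 1 := by linarith
  have hb1 : b ≤ 1 := by linarith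
  have hu1 : u ≤ 1 := by nlinarith
  have hv1 : v ≤ 1 := by nlinarith
  set s := 1 + u - v with hs
  have hD : 0 ≤ s ^ 2 - 4 * u := by
    nlinarith [mul_nonneg (mul_nonneg (by linarith : (0:ℝ) ≤ 1 - a - b)
      (by linarith : (0:ℝ) ≤ 1 - a + b)) (by nlinarith : (0:ℝ) ≤ (1 + a)^2 - b^2)]
  set d := Real.sqrt (s ^ 2 - 4 * u) with hd
  have hd0 : 0 ≤ d := Real.sqrt_nonneg _
  have hd2 : d ^ 2 = s ^ 2 - 4 * u := Real.sq_sqrt hD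
  have hs0 : 0 ≤ s := by linarith
  have hds : d ≤ s := by
    rw [hd]
    calc Real.sqrt (s ^ 2 - 4 * u) ≤ Real.sqrt (s ^ 2) := Real.sqrt_le_sqrt (by linarith)
    _ = s := by rw [Real.sqrt_sq hs0]
  have hd2s : d ≤ 2 - s := by
    rw [hd]
    calc Real.sqrt (s ^ 2 - 4 * u) ≤ Real.sqrt ((2 - s) ^ 2) := Real.sqrt_le_sqrt (by nlinarith)
    _ = 2 - s := Real.sqrt_sq (by linarith)
  refine ⟨(s + d) / 2, (s - d) / 2, by linarith, by linarith, by linarith, by linarith, ?_, ?_⟩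
  · nlinarith
  · nlinarith

private lemma pnr_val (x y : Fin 2 → ℂ) :
    star (prodVec x y) ⬝ᵥ
      (Matrix.diagonal (fun p : Fin 2 × Fin 2 =>
        if p = (0, 0) then 1 else if p = (1, 1) then Complex.I else 0)).mulVec (prodVec x y)
      = (normSq (x 0) * normSq (y 0) : ℝ) + ((normSq (x 1) * normSq (y 1) : ℝ)) * Complex.I := by
  simp [dotProduct, Matrix.mulVec_diagonal, prodVec, Fintype.sum_prod_type,
    Fin.sum_univ_two, Prod.ext_iff, Complex.normSq_eq_conj_mul_self]
  ring

private lemma pnr_norm (x : Fin 2 → ℂ) (h : star x ⬝ᵥ x = 1) :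
    normSq (x 0) + normSq (x 1) = 1 := by
  simp only [dotProduct, Fin.sum_univ_two, Pi.star_apply, RCLike.star_def] at h
  rw [← Complex.normSq_eq_conj_mul_self, ← Complex.normSq_eq_conj_mul_self] at h
  exact_mod_cast h

private lemma pnr_unit (p : ℝ) (hp : 0 ≤ p) (hp1 : p ≤ 1) :
    star ![(Real.sqrt p : ℂ), (Real.sqrt (1 - p) : ℂ)] ⬝ᵥ
      ![(Real.sqrt p : ℂ), (Real.sqrt (1 - p) : ℂ)] = 1 := by
  have e1 : Real.sqrt p * Real.sqrt p = p := Real.mul_self_sqrt hp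
  have e2 : Real.sqrt (1 - p) * Real.sqrt (1 - p) = 1 - p :=
    Real.mul_self_sqrt (by linarith)
  simp only [dotProduct, Fin.sum_univ_two, Pi.star_apply, RCLike.star_def,
    Matrix.cons_val_zero, Matrix.cons_val_one, Matrix.head_cons, Complex.conj_ofReal]
  have : ((Real.sqrt p : ℝ) : ℂ) * ((Real.sqrt p : ℝ) : ℂ) + ((Real.sqrt (1-p) : ℝ) : ℂ) * ((Real.sqrt (1-p) : ℝ) : ℂ) = (((Real.sqrt p * Real.sqrt p + Real.sqrt (1-p) * Real.sqrt (1-p)) : ℝ) : ℂ) := by push_cast; ring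
  rw [this, e1, e2]
  norm_num

theorem pnr_diag_example :
    let A : Matrix (Fin 2 × Fin 2) (Fin 2 × Fin 2) ℂ :=
      Matrix.diagonal (fun p => if p = (0, 0) then 1 else if p = (1, 1) then Complex.I else 0)
    pnr A = {z : ℂ | 0 ≤ z.re ∧ 0 ≤ z.im ∧ Real.sqrt z.re + Real.sqrt z.im ≤ 1} ∧
      (1 : ℂ) ∈ pnr A ∧ Complex.I ∈ pnr A ∧ (1 + Complex.I) / 2 ∉ pnr A ∧
      ¬ Convex ℝ (pnr A) := by
  intro A
  have hset : pnr A = {z : ℂ | 0 ≤ z.re ∧ 0 ≤ z.im ∧ Real.sqrt z.re + Real.sqrt z.im ≤ 1} := by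
    ext z
    constructor
    · rintro ⟨x, y, hx, hy, hval⟩
      rw [pnr_val x y] at hval
      have hx' := pnr_norm x hx
      have hy' := pnr_norm y hy
      have hre : z.re = normSq (x 0) * normSq (y 0) := by rw [← hval]; simp
      have him : z.im = normSq (x 1) * normSq (y 1) := by rw [← hval]; simp
      have h0x := Complex.normSq_nonneg (x 0)
      have h1x := Complex.normSq_nonneg (x 1)
      have h0y := Complex.normSq_nonneg (y 0)
      have h1y := Complex.normSq_nonneg (y 1)
      refine ⟨by rw [hre]; positivity, by rw [him]; positivity, ?_⟩
      rw [hre, him]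
      have e1 : normSq (x 1) = 1 - normSq (x 0) := by linarith
      have e2 : normSq (y 1) = 1 - normSq (y 0) := by linarith
      rw [e1, e2]
      exact pnr_fwd_ineq _ _ h0x (by linarith) h0y (by linarith)
    · rintro ⟨hre, him, hle⟩
      obtain ⟨p, q, hp0, hp1, hq0, hq1, hpq, hpq'⟩ := pnr_converse z.re z.im hre him hle
      refine ⟨![(Real.sqrt p : ℂ), (Real.sqrt (1 - p) : ℂ)],
        ![(Real.sqrt q : ℂ), (Real.sqrt (1 - q) : ℂ)],
        pnr_unit p hp0 hp1, pnr_unit q hq0 hq1, ?_⟩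
      rw [pnr_val]
      simp only [Matrix.cons_val_zero, Matrix.cons_val_one, Matrix.head_cons,
        Complex.normSq_ofReal]
      rw [Real.mul_self_sqrt hp0, Real.mul_self_sqrt hq0,
        Real.mul_self_sqrt (by linarith : (0:ℝ) ≤ 1 - p),
        Real.mul_self_sqrt (by linarith : (0:ℝ) ≤ 1 - q), hpq, hpq']
      exact Complex.re_add_im z
  have h1 : (1 : ℂ) ∈ pnr A := by
    rw [hset]
    refine ⟨by norm_num, by norm_num, ?_⟩
    norm_num
  have hI : Complex.I ∈ pnr A := by
    rw [hset]
    refine ⟨by norm_num, by norm_num, ?_⟩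
    norm_num
  have hmid : (1 + Complex.I) / 2 ∉ pnr A := by
    rw [hset]
    rintro ⟨-, -, hle⟩
    have hre : ((1 + Complex.I) / 2).re = 1 / 2 := by norm_num
    have him : ((1 + Complex.I) / 2).im = 1 / 2 := by norm_num
    rw [hre, him] at hle
    nlinarith [Real.sq_sqrt (show (0:ℝ) ≤ 1/2 by norm_num), Real.sqrt_nonneg (1/2 : ℝ)]
  refine ⟨hset, h1, hI, hmid, ?_⟩
  intro hC
  have := hC h1 hI (by norm_num : (0:ℝ) ≤ 1/2) (by norm_num : (0:ℝ) ≤ 1/2) (by norm_num)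
  have he : (1/2 : ℝ) • (1 : ℂ) + (1/2 : ℝ) • Complex.I = (1 + Complex.I) / 2 := by
    simp [Complex.real_smul]
    ring
  rw [he] at this
  exact hmid this
end
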